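/- Let A : ℝ → gl_n(ℝ) satisfy A' = -tr(S(A)²)·A + (1/2)[A,[A,Aᵗ]] - (1/2)tr(A)·[A,Aᵗ] with A(t) ≠ 0 for all t, and let B = A/‖A‖. Then (d/dt)‖[B,Bᵗ]‖² = 2‖A‖²·(‖[B,Bᵗ]‖⁴ - ‖[B,[B,Bᵗ]]‖²) ≤ 0; i.e. F(B) = ‖[B,Bᵗ]‖² is non-increasing along the normalized flow. -/

import Mathlib

open Matrix Filter

noncomputable section

abbrev Mat (n : ℕ) := Matrix (Fin n) (Fin n) ℝ

/-- Commutator bracket of matrices. -/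
def bkt {n : ℕ} (X Y : Mat n) : Mat n := X * Y - Y * X

/-- Frobenius inner product ⟨X,Y⟩ = tr(XYᵗ). -/
def frob {n : ℕ} (X Y : Mat n) : ℝ := Matrix.trace (X * Yᵀ)

/-- Squared Frobenius norm ‖X‖² = tr(XXᵗ). -/
def sqnorm {n : ℕ} (X : Mat n) : ℝ := frob X X

/-- Symmetric part S(X) = (X+Xᵗ)/2. -/
def symPart {n : ℕ} (X : Mat n) : Mat n := (1/2 : ℝ) • (X + Xᵀ)

/-- Right-hand side of the bracket flow ODE. -/
def rhs {n : ℕ} (A : Mat n) : Mat n :=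
  (-(Matrix.trace (symPart A * symPart A))) • A
    + (1/2 : ℝ) • bkt A (bkt A Aᵀ)
    - ((1/2 : ℝ) * Matrix.trace A) • bkt A Aᵀ

/-!
Write `a = ‖A‖²`, `g = ‖[A,Aᵗ]‖²`, `h = ‖[A,[A,Aᵗ]]‖²` and `σ = tr S(A)²`. Since `ad Y` and
`ad Yᵗ` are adjoint for the Frobenius product, pairing the flow with `A` and with
`[A,[A,Aᵗ]]` gives `a' = -2σa - g` and `g' = -4σg - 2h`. As `‖[B,Bᵗ]‖² = g/a²` and
`‖[B,[B,Bᵗ]]‖² = h/a³`, the `σ`-terms cancel in `(g/a²)' = 2g²/a³ - 2h/a²`; this is `≤ 0` by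
Cauchy–Schwarz applied to `⟨B,[B,[B,Bᵗ]]⟩ = -‖[B,Bᵗ]‖²` with `‖B‖ = 1`.
-/

section

variable {n : ℕ}

section Frobenius

lemma frob_eq_vec_dotProduct (X Y : Mat n) : frob X Y = vec X ⬝ᵥ vec Y := by
  rw [vec_dotProduct_vec, frob, ← trace_transpose, transpose_mul, transpose_transpose,
    trace_mul_comm]

lemma frob_eq_sum (X Y : Mat n) : frob X Y = ∑ i, ∑ j, X i j * Y i j := by
  simp [frob, trace, mul_apply]

lemma frob_comm (X Y : Mat n) : frob X Y = frob Y X := by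
  simp only [frob_eq_vec_dotProduct, dotProduct_comm]

lemma frob_add_right (X Y Z : Mat n) : frob X (Y + Z) = frob X Y + frob X Z := by
  simp only [frob_eq_vec_dotProduct, vec_add, dotProduct_add]

lemma frob_sub_right (X Y Z : Mat n) : frob X (Y - Z) = frob X Y - frob X Z := by
  simp only [frob_eq_vec_dotProduct, vec_sub, dotProduct_sub]

lemma frob_smul_right (c : ℝ) (X Y : Mat n) : frob X (c • Y) = c * frob X Y := by
  simp only [frob_eq_vec_dotProduct, vec_smul, dotProduct_smul, smul_eq_mul]

lemma frob_neg_left (X Y : Mat n) : frob (-X) Y = -frob X Y := by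
  simp only [frob_eq_vec_dotProduct, vec_neg, neg_dotProduct]

lemma frob_zero_left (Y : Mat n) : frob 0 Y = 0 := by
  simp only [frob_eq_vec_dotProduct, vec_zero, zero_dotProduct]

lemma frob_transpose_right_of_isSymm {C : Mat n} (hC : C.IsSymm) (Y : Mat n) :
    frob C Yᵀ = frob C Y := by
  rw [frob, frob, transpose_transpose, ← trace_transpose, transpose_mul, hC.eq, trace_mul_comm]

lemma sqnorm_nonneg (X : Mat n) : 0 ≤ sqnorm X := by
  simpa [sqnorm, frob_eq_vec_dotProduct] using dotProduct_star_self_nonneg (vec X)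

lemma sqnorm_pos {X : Mat n} (hX : X ≠ 0) : 0 < sqnorm X := by
  refine (sqnorm_nonneg X).lt_of_ne' ?_
  simpa [sqnorm, frob_eq_vec_dotProduct, vec_eq_zero_iff] using hX

lemma sqnorm_smul (c : ℝ) (X : Mat n) : sqnorm (c • X) = c ^ 2 * sqnorm X := by
  simp only [sqnorm, frob_eq_vec_dotProduct, vec_smul, smul_dotProduct, dotProduct_smul,
    smul_eq_mul]
  ring

lemma sq_frob_le (X Y : Mat n) : frob X Y ^ 2 ≤ sqnorm X * sqnorm Y := by
  simpa only [sqnorm, frob_eq_vec_dotProduct, dotProduct, sq] using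
    Finset.sum_mul_sq_le_sq_mul_sq Finset.univ (vec X) (vec Y)

end Frobenius

section Bracket

lemma bkt_swap (X Y : Mat n) : bkt Y X = -bkt X Y :=
  (neg_sub _ _).symm

lemma bkt_self (X : Mat n) : bkt X X = 0 := sub_self _

lemma bkt_transpose (X Y : Mat n) : (bkt X Y)ᵀ = bkt Yᵀ Xᵀ := by
  simp [bkt, transpose_mul]

lemma bkt_smul_smul (c d : ℝ) (X Y : Mat n) : bkt (c • X) (d • Y) = (c * d) • bkt X Y := by
  simp only [bkt, smul_mul_smul_comm, mul_comm d c, smul_sub]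

lemma isSymm_bkt_self_transpose (X : Mat n) : (bkt X Xᵀ).IsSymm := by
  rw [IsSymm, bkt_transpose, transpose_transpose]

lemma frob_bkt_left (X Y Z : Mat n) : frob X (bkt Y Z) = frob (bkt Yᵀ X) Z := by
  simp only [frob, bkt, transpose_sub, transpose_mul, Matrix.mul_sub, Matrix.sub_mul,
    trace_sub, Matrix.mul_assoc]
  rw [trace_mul_comm Yᵀ, Matrix.mul_assoc]

lemma frob_bkt_right (X Y Z : Mat n) : frob X (bkt Y Z) = frob (bkt X Zᵀ) Y := by
  simp only [frob, bkt, transpose_sub, transpose_mul, Matrix.mul_sub, Matrix.sub_mul,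
    trace_sub, Matrix.mul_assoc]
  rw [trace_mul_comm Zᵀ, Matrix.mul_assoc]

lemma frob_self_bkt_self_transpose (X : Mat n) : frob X (bkt X Xᵀ) = 0 := by
  rw [frob_bkt_right, transpose_transpose, bkt_self, frob_zero_left]

lemma frob_self_bkt_bkt (X : Mat n) : frob X (bkt X (bkt X Xᵀ)) = -sqnorm (bkt X Xᵀ) := by
  rw [frob_bkt_left, bkt_swap, frob_neg_left, sqnorm]

lemma frob_bkt_bkt_bkt_self_transpose (X : Mat n) :
    frob (bkt X (bkt X Xᵀ)) (bkt X Xᵀ) = 0 := by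
  rw [frob_comm, frob_bkt_right, (isSymm_bkt_self_transpose X).eq, bkt_self, frob_zero_left]

lemma frob_bkt_self_transpose_bkt_add_bkt (X D : Mat n) :
    frob (bkt X Xᵀ) (bkt D Xᵀ + bkt X Dᵀ) = -2 * frob (bkt X (bkt X Xᵀ)) D := by
  have hD : frob (bkt X Xᵀ) (bkt D Xᵀ) = -frob (bkt X (bkt X Xᵀ)) D := by
    rw [frob_bkt_right, transpose_transpose, bkt_swap, frob_neg_left]
  rw [frob_add_right, ← frob_transpose_right_of_isSymm (isSymm_bkt_self_transpose X) (bkt X Dᵀ),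
    bkt_transpose, transpose_transpose, hD]
  ring

lemma sq_sqnorm_bkt_le (X : Mat n) :
    sqnorm (bkt X Xᵀ) ^ 2 ≤ sqnorm X * sqnorm (bkt X (bkt X Xᵀ)) := by
  simpa [frob_self_bkt_bkt] using sq_frob_le X (bkt X (bkt X Xᵀ))

end Bracket

section Derivatives

def HasEntrywiseDerivAt (X : ℝ → Mat n) (X' : Mat n) (t : ℝ) : Prop :=
  ∀ i j, HasDerivAt (fun s => X s i j) (X' i j) t

namespace HasEntrywiseDerivAt

variable {X Y : ℝ → Mat n} {X' Y' : Mat n} {t : ℝ}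

lemma transpose (hX : HasEntrywiseDerivAt X X' t) :
    HasEntrywiseDerivAt (fun s => (X s)ᵀ) X'ᵀ t :=
  fun i j => hX j i

lemma sub (hX : HasEntrywiseDerivAt X X' t) (hY : HasEntrywiseDerivAt Y Y' t) :
    HasEntrywiseDerivAt (fun s => X s - Y s) (X' - Y') t :=
  fun i j => (hX i j).sub (hY i j)

lemma mul (hX : HasEntrywiseDerivAt X X' t) (hY : HasEntrywiseDerivAt Y Y' t) :
    HasEntrywiseDerivAt (fun s => X s * Y s) (X' * Y t + X t * Y') t := by
  intro i j
  simp only [mul_apply, Matrix.add_apply, ← Finset.sum_add_distrib]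
  exact HasDerivAt.fun_sum fun k _ => (hX i k).fun_mul (hY k j)

lemma bkt (hX : HasEntrywiseDerivAt X X' t) (hY : HasEntrywiseDerivAt Y Y' t) :
    HasEntrywiseDerivAt (fun s => _root_.bkt (X s) (Y s))
      (_root_.bkt X' (Y t) + _root_.bkt (X t) Y') t := by
  have h := (hX.mul hY).sub (hY.mul hX)
  rwa [show X' * Y t + X t * Y' - (Y' * X t + Y t * X')
    = _root_.bkt X' (Y t) + _root_.bkt (X t) Y' by simp only [_root_.bkt]; abel] at h

lemma hasDerivAt_frob (hX : HasEntrywiseDerivAt X X' t) (hY : HasEntrywiseDerivAt Y Y' t) :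
    HasDerivAt (fun s => frob (X s) (Y s)) (frob X' (Y t) + frob (X t) Y') t := by
  simp only [frob_eq_sum, ← Finset.sum_add_distrib]
  exact HasDerivAt.fun_sum fun i _ => HasDerivAt.fun_sum fun j _ => (hX i j).mul (hY i j)

lemma hasDerivAt_sqnorm (hX : HasEntrywiseDerivAt X X' t) :
    HasDerivAt (fun s => sqnorm (X s)) (2 * frob (X t) X') t :=
  (hX.hasDerivAt_frob hX).congr_deriv (by rw [frob_comm X']; ring)

end HasEntrywiseDerivAt

end Derivatives

section Flow

lemma frob_self_rhs (X : Mat n) :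
    frob X (rhs X) = -trace (symPart X * symPart X) * sqnorm X - sqnorm (bkt X Xᵀ) / 2 := by
  simp only [rhs, frob_sub_right, frob_add_right, frob_smul_right, frob_self_bkt_bkt,
    frob_self_bkt_self_transpose, sqnorm]
  ring

lemma frob_bkt_bkt_rhs (X : Mat n) :
    frob (bkt X (bkt X Xᵀ)) (rhs X) =
      trace (symPart X * symPart X) * sqnorm (bkt X Xᵀ) + sqnorm (bkt X (bkt X Xᵀ)) / 2 := by
  simp only [rhs, frob_sub_right, frob_add_right, frob_smul_right,
    frob_bkt_bkt_bkt_self_transpose, frob_comm _ X, frob_self_bkt_bkt, sqnorm]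
  ring

variable {A : ℝ → Mat n} {t : ℝ}

lemma hasDerivAt_sqnorm_of_flow (hA : HasEntrywiseDerivAt A (rhs (A t)) t) :
    HasDerivAt (fun s => sqnorm (A s))
      (-2 * trace (symPart (A t) * symPart (A t)) * sqnorm (A t) - sqnorm (bkt (A t) (A t)ᵀ)) t :=
  hA.hasDerivAt_sqnorm.congr_deriv (by rw [frob_self_rhs]; ring)

lemma hasDerivAt_sqnorm_bkt_of_flow (hA : HasEntrywiseDerivAt A (rhs (A t)) t) :
    HasDerivAt (fun s => sqnorm (bkt (A s) (A s)ᵀ))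
      (-4 * trace (symPart (A t) * symPart (A t)) * sqnorm (bkt (A t) (A t)ᵀ)
        - 2 * sqnorm (bkt (A t) (bkt (A t) (A t)ᵀ))) t :=
  (hA.bkt hA.transpose).hasDerivAt_sqnorm.congr_deriv
    (by rw [frob_bkt_self_transpose_bkt_add_bkt, frob_bkt_bkt_rhs]; ring)

end Flow

section Normalization

def Mat.normalize (X : Mat n) : Mat n := (√(sqnorm X))⁻¹ • X

lemma sq_inv_sqrt_sqnorm (X : Mat n) : (√(sqnorm X))⁻¹ ^ 2 = (sqnorm X)⁻¹ := by
  rw [inv_pow, Real.sq_sqrt (sqnorm_nonneg X)]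

lemma sqnorm_normalize {X : Mat n} (hX : X ≠ 0) : sqnorm X.normalize = 1 := by
  rw [Mat.normalize, sqnorm_smul, sq_inv_sqrt_sqnorm, inv_mul_cancel₀ (sqnorm_pos hX).ne']

lemma sqnorm_bkt_normalize (X : Mat n) :
    sqnorm (bkt X.normalize X.normalizeᵀ) = sqnorm (bkt X Xᵀ) / sqnorm X ^ 2 := by
  rw [Mat.normalize, transpose_smul, bkt_smul_smul, sqnorm_smul,
    show ∀ c : ℝ, (c * c) ^ 2 = (c ^ 2) ^ 2 by intro c; ring, sq_inv_sqrt_sqnorm,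
    inv_pow, div_eq_inv_mul]

lemma sqnorm_bkt_bkt_normalize (X : Mat n) :
    sqnorm (bkt X.normalize (bkt X.normalize X.normalizeᵀ)) =
      sqnorm (bkt X (bkt X Xᵀ)) / sqnorm X ^ 3 := by
  rw [Mat.normalize, transpose_smul, bkt_smul_smul, bkt_smul_smul, sqnorm_smul,
    show ∀ c : ℝ, (c * (c * c)) ^ 2 = (c ^ 2) ^ 3 by intro c; ring, sq_inv_sqrt_sqnorm,
    inv_pow, div_eq_inv_mul]

lemma sq_sqnorm_bkt_normalize_le {X : Mat n} (hX : X ≠ 0) :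
    sqnorm (bkt X.normalize X.normalizeᵀ) ^ 2 ≤
      sqnorm (bkt X.normalize (bkt X.normalize X.normalizeᵀ)) := by
  simpa [sqnorm_normalize hX] using sq_sqnorm_bkt_le X.normalize

end Normalization

lemma hasDerivAt_sqnorm_bkt_normalize_of_flow {A : ℝ → Mat n} {t : ℝ}
    (hA : HasEntrywiseDerivAt A (rhs (A t)) t) (hne : A t ≠ 0) :
    HasDerivAt (fun s => sqnorm (bkt (A s).normalize (A s).normalizeᵀ))
      (2 * sqnorm (A t) * (sqnorm (bkt (A t).normalize (A t).normalizeᵀ) ^ 2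
        - sqnorm (bkt (A t).normalize (bkt (A t).normalize (A t).normalizeᵀ)))) t := by
  have ha := (sqnorm_pos hne).ne'
  simp only [sqnorm_bkt_normalize, sqnorm_bkt_bkt_normalize]
  refine ((hasDerivAt_sqnorm_bkt_of_flow hA).fun_div ((hasDerivAt_sqnorm_of_flow hA).fun_pow 2)
    (pow_ne_zero 2 ha)).congr_deriv ?_
  field_simp
  ring

end

theorem stmt17 {n : ℕ} (A : ℝ → Mat n)
    (hA : ∀ t : ℝ, ∀ i j, HasDerivAt (fun s => A s i j) (rhs (A t) i j) t)
    (hne : ∀ t : ℝ, A t ≠ 0)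
    (B : ℝ → Mat n) (hB : ∀ t, B t = (Real.sqrt (sqnorm (A t)))⁻¹ • A t) :
    (∀ t : ℝ, HasDerivAt (fun s => sqnorm (bkt (B s) (B s)ᵀ))
      (2 * sqnorm (A t) *
        (sqnorm (bkt (B t) (B t)ᵀ) ^ 2 - sqnorm (bkt (B t) (bkt (B t) (B t)ᵀ)))) t) ∧
    (∀ t : ℝ, 2 * sqnorm (A t) *
        (sqnorm (bkt (B t) (B t)ᵀ) ^ 2 - sqnorm (bkt (B t) (bkt (B t) (B t)ᵀ))) ≤ 0) ∧
    Antitone (fun t => sqnorm (bkt (B t) (B t)ᵀ)) := by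
  obtain rfl : B = fun t => (A t).normalize := funext hB
  have hderiv t := hasDerivAt_sqnorm_bkt_normalize_of_flow (hA t) (hne t)
  have hnonpos t := mul_nonpos_of_nonneg_of_nonpos (mul_nonneg zero_le_two (sqnorm_nonneg (A t)))
    (sub_nonpos.2 (sq_sqnorm_bkt_normalize_le (hne t)))
  exact ⟨hderiv, hnonpos, antitone_of_deriv_nonpos (fun t => (hderiv t).differentiableAt)
    fun t => (hderiv t).deriv ▸ hnonpos t⟩
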